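/- arXiv:1706.06545 — 5 statements merged into one kernel-verified Lean document; each statement's English description precedes it below -/
import Mathlib

section
/- In a stably Gelfand quantale Q, every two-sided element a (i.e., a·1 ≤ a and 1·a ≤ a) is idempotent: a·a = a. -/
/-- An involutive quantale: a complete lattice with an associative multiplication
distributing over arbitrary joins in each variable, and a join-preserving
involution that is an anti-automorphism of period 2. -/
class InvQuantale (Q : Type*) extends CompleteLattice Q, Semigroup Q, StarMul Q where
  mul_sSup : ∀ (a : Q) (S : Set Q), a * sSup S = ⨆ s ∈ S, a * s
  sSup_mul : ∀ (S : Set Q) (a : Q), sSup S * a = ⨆ s ∈ S, s * a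
  star_sSup : ∀ (S : Set Q), star (sSup S) = ⨆ s ∈ S, star s

/-- The set `I_b(Q)` of partial units relative to `b`. -/
def Ib {Q : Type*} [InvQuantale Q] (b : Q) : Set Q :=
  {a | star a * a ≤ b ∧ a * star a ≤ b ∧ a * b ≤ a ∧ b * a ≤ a}

/-- `Q` is stably Gelfand if `a a* a ≤ a` implies `a a* a = a`. -/
def IsStablyGelfand (Q : Type*) [InvQuantale Q] : Prop :=
  ∀ a : Q, a * star a * a ≤ a → a * star a * a = a

instance InvQuantale.toIsQuantale (Q : Type*) [InvQuantale Q] : IsQuantale Q where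
  mul_sSup_distrib := InvQuantale.mul_sSup
  sSup_mul_distrib := InvQuantale.sSup_mul

section IsQuantale

variable {Q : Type*} [Semigroup Q] [CompleteLattice Q] [IsQuantale Q] {a : Q}

theorem mul_le_of_mul_top_le (ha : a * ⊤ ≤ a) (b : Q) : a * b ≤ a :=
  (mul_le_mul_right le_top a).trans ha

theorem mul_le_of_top_mul_le (ha : ⊤ * a ≤ a) (b : Q) : b * a ≤ a :=
  (mul_le_mul_left le_top a).trans ha

end IsQuantale

theorem twoSided_idempotent {Q : Type*} [InvQuantale Q]
    (h : IsStablyGelfand Q) (a : Q) (h1 : a * ⊤ ≤ a) (h2 : ⊤ * a ≤ a) :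
    a * a = a := by
  have hsq : a * a ≤ a := mul_le_of_mul_top_le h1 a
  have hgelfand : a * star a * a = a :=
    h a ((mul_le_mul_left (mul_le_of_mul_top_le h1 (star a)) a).trans hsq)
  refine le_antisymm hsq ?_
  calc a = a * (star a * a) := by rw [← mul_assoc, hgelfand]
    _ ≤ a * a := mul_le_mul_right (mul_le_of_top_mul_le h2 (star a)) a
end

section
/- In a stably Gelfand quantale Q, every two-sided element is fixed by the involution: if a·1 ≤ a and 1·a ≤ a then a* = a. -/
namespace InvQuantale

variable {Q : Type*} [InvQuantale Q]

theorem mul_sup (a b c : Q) : a * (b ⊔ c) = a * b ⊔ a * c := by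
  rw [← sSup_pair, mul_sSup, iSup_pair]

theorem sup_mul (a b c : Q) : (a ⊔ b) * c = a * c ⊔ b * c := by
  rw [← sSup_pair, sSup_mul, iSup_pair]

theorem star_sup (a b : Q) : star (a ⊔ b) = star a ⊔ star b := by
  rw [← sSup_pair, star_sSup, iSup_pair]

instance : MulLeftMono Q where
  elim a b c hbc := show a * b ≤ a * c by
    rw [← sup_eq_right, ← mul_sup, sup_eq_right.mpr hbc]

instance : MulRightMono Q where
  elim a b c hbc := show b * a ≤ c * a by
    rw [← sup_eq_right, ← sup_mul, sup_eq_right.mpr hbc]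

theorem star_le_star {a b : Q} (hab : a ≤ b) : star a ≤ star b := by
  rw [← sup_eq_right, ← star_sup, sup_eq_right.mpr hab]

theorem star_eq_of_star_le {a : Q} (ha : star a ≤ a) : star a = a :=
  ha.antisymm (by simpa only [star_star] using star_le_star ha)

end InvQuantale

open InvQuantale

def IsTwoSided {Q : Type*} [InvQuantale Q] (a : Q) : Prop :=
  a * ⊤ ≤ a ∧ ⊤ * a ≤ a

namespace IsTwoSided

variable {Q : Type*} [InvQuantale Q] {a : Q}

theorem mul_right_le (ha : IsTwoSided a) (b : Q) : a * b ≤ a :=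
  (mul_le_mul_right le_top a).trans ha.1

theorem mul_left_le (ha : IsTwoSided a) (b : Q) : b * a ≤ a :=
  (mul_le_mul_left le_top a).trans ha.2

theorem mul_mul_le (ha : IsTwoSided a) (b c : Q) : b * a * c ≤ a :=
  (mul_le_mul_left (ha.mul_left_le b) c).trans (ha.mul_right_le c)

end IsTwoSided

/-- Stable Gelfandness makes `a = a a* a`, so `a* = a* a a*`, which lies below `a` because `a` is
two-sided. -/
theorem IsStablyGelfand.star_eq_of_isTwoSided {Q : Type*} [InvQuantale Q]
    (hQ : IsStablyGelfand Q) {a : Q} (ha : IsTwoSided a) : star a = a := by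
  have hGelfand : a * star a * a = a := hQ a (ha.mul_left_le _)
  have hstar : star a * a * star a = star a := by
    simpa only [star_mul, star_star, mul_assoc] using congrArg star hGelfand
  refine star_eq_of_star_le ?_
  rw [← hstar]
  exact ha.mul_mul_le _ _

theorem twoSided_selfAdjoint {Q : Type*} [InvQuantale Q]
    (h : IsStablyGelfand Q) (a : Q) (h1 : a * ⊤ ≤ a) (h2 : ⊤ * a ≤ a) :
    star a = a :=
  h.star_eq_of_isTwoSided ⟨h1, h2⟩
end

section
/- Let Q be a stably Gelfand quantale and b ∈ Q a projection. Then I_b(Q), with the multiplication of Q and with s ↦ s* as inverse operation, is an inverse semigroup: every s ∈ I_b(Q) satisfies s = ss*s, and idempotents commute. -/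
/-!
Regularity is immediate: `s s* s ≤ s b ≤ s`, and stable Gelfandness upgrades this to equality.
An idempotent `f ∈ I_b` is self-adjoint: regularity of `f*` gives `f* = (f* f)(f f*) ≤ b b`,
hence `f* f ≤ b b f ≤ f` and likewise `f f* ≤ f`, so `f* ≤ f f = f`; applying `*` gives equality.
For idempotents `f, g ∈ I_b`, the product `f g` lies in `I_b`, which is closed under
multiplication, so it is regular: `f g = (f g)(g f)(f g) = (f g)²`. Being an idempotent of `I_b`,
it is self-adjoint, i.e. `f g = (f g)* = g f`.
-/

namespace InvQuantale

variable {Q : Type*} [InvQuantale Q]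

instance toIsQuantale_s9 : IsQuantale Q := ⟨mul_sSup, sSup_mul⟩

lemma star_sup_s9 (x y : Q) : star (x ⊔ y) = star x ⊔ star y := by
  rw [← sSup_pair, star_sSup, iSup_pair]

lemma star_le_star_s9 {x y : Q} (h : x ≤ y) : star x ≤ star y := by
  rw [← sup_eq_right, ← star_sup_s9, sup_eq_right.2 h]

end InvQuantale

namespace Ib

variable {Q : Type*} [InvQuantale Q] {b s t f g : Q}

lemma mul_star_mul_self (hQ : IsStablyGelfand Q) (hs : s ∈ Ib b) : s * star s * s = s :=
  hQ s <| calc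
    s * star s * s = s * (star s * s) := mul_assoc _ _ _
    _ ≤ s * b := mul_le_mul_right hs.1 s
    _ ≤ s := hs.2.2.1

lemma mul_mem (hs : s ∈ Ib b) (ht : t ∈ Ib b) : s * t ∈ Ib b := by
  obtain ⟨hs₁, hs₂, hs₃, hs₄⟩ := hs
  obtain ⟨ht₁, ht₂, ht₃, ht₄⟩ := ht
  refine ⟨?_, ?_, ?_, ?_⟩
  · calc star (s * t) * (s * t) = star t * (star s * s * t) := by
          simp only [star_mul, mul_assoc]
      _ ≤ star t * (b * t) := mul_le_mul_right (mul_le_mul_left hs₁ t) _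
      _ ≤ star t * t := mul_le_mul_right ht₄ _
      _ ≤ b := ht₁
  · calc s * t * star (s * t) = s * (t * star t) * star s := by
          simp only [star_mul, mul_assoc]
      _ ≤ s * b * star s := mul_le_mul_left (mul_le_mul_right ht₂ s) _
      _ ≤ s * star s := mul_le_mul_left hs₃ _
      _ ≤ b := hs₂
  · calc s * t * b = s * (t * b) := mul_assoc _ _ _
      _ ≤ s * t := mul_le_mul_right ht₃ s
  · calc b * (s * t) = b * s * t := (mul_assoc _ _ _).symm
      _ ≤ s * t := mul_le_mul_left hs₄ t

lemma star_eq_self_of_isIdempotentElem (hQ : IsStablyGelfand Q) (hf : f ∈ Ib b)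
    (hff : IsIdempotentElem f) : star f = f := by
  obtain ⟨hf₁, hf₂, hf₃, hf₄⟩ := hf
  have hsplit : star f = star f * f * (f * star f) := by
    calc star f = star (f * star f * f) := by rw [mul_star_mul_self hQ ⟨hf₁, hf₂, hf₃, hf₄⟩]
      _ = star f * (f * f) * star f := by simp only [star_mul, star_star, mul_assoc, hff.eq]
      _ = star f * f * (f * star f) := by simp only [mul_assoc]
  have hle_bb : star f ≤ b * b := hsplit ▸ mul_le_mul' hf₁ hf₂
  have hleft : star f * f ≤ f :=
    calc star f * f ≤ b * (b * f) := (mul_le_mul_left hle_bb f).trans_eq (mul_assoc _ _ _)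
      _ ≤ b * f := mul_le_mul_right hf₄ b
      _ ≤ f := hf₄
  have hright : f * star f ≤ f :=
    calc f * star f ≤ f * b * b := (mul_le_mul_right hle_bb f).trans_eq (mul_assoc _ _ _).symm
      _ ≤ f * b := mul_le_mul_left hf₃ b
      _ ≤ f := hf₃
  have hle : star f ≤ f := hsplit ▸ (mul_le_mul' hleft hright).trans_eq hff.eq
  exact le_antisymm hle (by simpa using InvQuantale.star_le_star_s9 hle)

lemma mul_comm_of_isIdempotentElem (hQ : IsStablyGelfand Q) (hf : f ∈ Ib b) (hg : g ∈ Ib b)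
    (hff : IsIdempotentElem f) (hgg : IsIdempotentElem g) : f * g = g * f := by
  have hstar : star (f * g) = g * f := by
    rw [star_mul, star_eq_self_of_isIdempotentElem hQ hf hff,
      star_eq_self_of_isIdempotentElem hQ hg hgg]
  have hfg : f * g ∈ Ib b := mul_mem hf hg
  have hidem : IsIdempotentElem (f * g) :=
    calc f * g * (f * g) = f * (g * g) * (f * f) * g := by
          simp only [hff.eq, hgg.eq, mul_assoc]
      _ = f * g * star (f * g) * (f * g) := by simp only [hstar, mul_assoc]
      _ = f * g := mul_star_mul_self hQ hfg
  rw [← hstar, star_eq_self_of_isIdempotentElem hQ hfg hidem]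

end Ib

theorem Ib_inverse_semigroup_general {Q : Type*} [InvQuantale Q]
    (h : IsStablyGelfand Q) (b : Q) :
    (∀ s ∈ Ib b, s * star s * s = s) ∧
      (∀ f ∈ Ib b, ∀ g ∈ Ib b, f * f = f → g * g = g → f * g = g * f) :=
  ⟨fun _ hs => Ib.mul_star_mul_self h hs,
    fun _ hf _ hg hff hgg => Ib.mul_comm_of_isIdempotentElem h hf hg hff hgg⟩

theorem Ib_inverse_semigroup {Q : Type*} [InvQuantale Q]
    (h : IsStablyGelfand Q) (b : Q) (hb : b * b = b) (hb' : star b = b) :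
    (∀ s ∈ Ib b, s * star s * s = s) ∧
      (∀ f ∈ Ib b, ∀ g ∈ Ib b, f * f = f → g * g = g → f * g = g * f) :=
  Ib_inverse_semigroup_general h b
end

section
/- Let Q be a stably Gelfand quantale and b ∈ Q a projection. If S ⊆ I_b(Q) is a compatible subset (i.e., st* and s*t are idempotents of I_b(Q) for all s, t ∈ S), then the join ⋁S computed in Q belongs to I_b(Q). -/
/-!
Compatibility makes every product `s* t` and `s t*` (`s, t ∈ S`) an idempotent of `I_b(Q)`,
and in a stably Gelfand quantale an idempotent `e ∈ I_b(Q)` lies below `b`: stability upgrades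
`e e* e ≤ e b ≤ e` to `e = e e* e = (e e*)(e* e) ≤ b b`. Since multiplication and involution
distribute over joins, `(⋁S)* (⋁S) = ⋁ s* t ≤ b` and `(⋁S)(⋁S)* = ⋁ s t* ≤ b`, while the
conditions `a b ≤ a`, `b a ≤ a` are inherited by joins directly.
-/

section IsQuantale

variable {α : Type*} [Semigroup α] [CompleteLattice α] [IsQuantale α]

theorem sSup_mul_le_iff {S : Set α} {a c : α} : sSup S * a ≤ c ↔ ∀ s ∈ S, s * a ≤ c := by
  rw [sSup_mul_distrib, iSup₂_le_iff]

theorem mul_sSup_le_iff {S : Set α} {a c : α} : a * sSup S ≤ c ↔ ∀ s ∈ S, a * s ≤ c := by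
  rw [mul_sSup_distrib, iSup₂_le_iff]

theorem sSup_mul_sSup_le_iff {S T : Set α} {c : α} :
    sSup S * sSup T ≤ c ↔ ∀ s ∈ S, ∀ t ∈ T, s * t ≤ c := by
  rw [sSup_mul_le_iff]
  exact forall₂_congr fun _ _ => mul_sSup_le_iff

end IsQuantale

namespace InvQuantale

variable {Q : Type*} [InvQuantale Q]

instance : IsQuantale Q := ⟨mul_sSup, sSup_mul⟩

theorem star_mono : Monotone (star : Q → Q) := by
  intro x y hxy
  calc star x ≤ ⨆ s ∈ ({x, y} : Set Q), star s := le_iSup₂_of_le x (by simp) le_rfl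
    _ = star y := by rw [← star_sSup, sSup_pair, sup_eq_right.mpr hxy]

theorem star_sSup_eq_sSup_image (S : Set Q) : star (sSup S) = sSup (star '' S) := by
  rw [star_sSup, sSup_image]

end InvQuantale

open InvQuantale

namespace Ib

variable {Q : Type*} [InvQuantale Q] {b a c : Q}

theorem mul_mem_s10 (ha : a ∈ Ib b) (hc : c ∈ Ib b) : a * c ∈ Ib b := by
  obtain ⟨ha₁, ha₂, ha₃, ha₄⟩ := ha
  obtain ⟨hc₁, hc₂, hc₃, hc₄⟩ := hc
  refine ⟨?_, ?_, ?_, ?_⟩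
  · calc star (a * c) * (a * c) = star c * (star a * a) * c := by simp only [star_mul, mul_assoc]
      _ ≤ star c * (b * c) := by rw [mul_assoc]; gcongr
      _ ≤ b := (mul_le_mul_right hc₄ _).trans hc₁
  · calc a * c * star (a * c) = (a * (c * star c)) * star a := by simp only [star_mul, mul_assoc]
      _ ≤ a * b * star a := by gcongr
      _ ≤ b := (mul_le_mul_left ha₃ _).trans ha₂
  · calc a * c * b = a * (c * b) := mul_assoc _ _ _
      _ ≤ a * c := mul_le_mul_right hc₃ _
  · calc b * (a * c) = b * a * c := (mul_assoc _ _ _).symm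
      _ ≤ a * c := mul_le_mul_left ha₄ _

theorem star_mem (hb : star b = b) (ha : a ∈ Ib b) : star a ∈ Ib b := by
  obtain ⟨ha₁, ha₂, ha₃, ha₄⟩ := ha
  refine ⟨?_, ?_, ?_, ?_⟩
  · rwa [star_star]
  · rwa [star_star]
  · simpa only [star_mul, hb] using star_mono ha₄
  · simpa only [star_mul, hb] using star_mono ha₃

end Ib

theorem IsStablyGelfand.le_of_mem_Ib_of_mul_self {Q : Type*} [InvQuantale Q]
    (h : IsStablyGelfand Q) {b e : Q} (hb : b * b ≤ b) (he : e ∈ Ib b) (hee : e * e = e) :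
    e ≤ b := by
  obtain ⟨he₁, he₂, he₃, -⟩ := he
  have hregular : e * star e * e = e :=
    h e <| calc e * star e * e = e * (star e * e) := mul_assoc _ _ _
      _ ≤ e * b := mul_le_mul_right he₁ _
      _ ≤ e := he₃
  calc e = e * star (e * e) * e := by rw [hee, hregular]
    _ = (e * star e) * (star e * e) := by simp only [star_mul, mul_assoc]
    _ ≤ b * b := mul_le_mul' he₂ he₁
    _ ≤ b := hb

theorem Ib_closed_under_compatible_joins {Q : Type*} [InvQuantale Q]
    (h : IsStablyGelfand Q) (b : Q) (hb : b * b = b) (hb' : star b = b)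
    (S : Set Q) (hS : S ⊆ Ib b)
    (hcomp : ∀ s ∈ S, ∀ t ∈ S,
      (s * star t) * (s * star t) = s * star t ∧
      (star s * t) * (star s * t) = star s * t) :
    sSup S ∈ Ib b := by
  have hstar_mul : ∀ s ∈ S, ∀ t ∈ S, star s * t ≤ b := fun s hs t ht =>
    h.le_of_mem_Ib_of_mul_self hb.le (Ib.mul_mem_s10 (Ib.star_mem hb' (hS hs)) (hS ht))
      (hcomp s hs t ht).2
  have hmul_star : ∀ s ∈ S, ∀ t ∈ S, s * star t ≤ b := fun s hs t ht =>
    h.le_of_mem_Ib_of_mul_self hb.le (Ib.mul_mem_s10 (hS hs) (Ib.star_mem hb' (hS ht)))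
      (hcomp s hs t ht).1
  refine ⟨?_, ?_, ?_, ?_⟩
  · rw [star_sSup_eq_sSup_image, sSup_mul_sSup_le_iff]
    simpa only [Set.forall_mem_image] using hstar_mul
  · rw [star_sSup_eq_sSup_image, sSup_mul_sSup_le_iff]
    simpa only [Set.forall_mem_image] using hmul_star
  · exact sSup_mul_le_iff.2 fun s hs => (hS hs).2.2.1.trans (le_sSup hs)
  · exact mul_sSup_le_iff.2 fun s hs => (hS hs).2.2.2.trans (le_sSup hs)
end

section
/- Let X be a set, Q = P(X × X), R an equivalence relation on a subset Y ⊆ X, and Q' = P(Y/R × Y/R) the quantale of binary relations on the quotient set. Then the inverse semigroup I_R(Q) = {U : U°U ⊆ R, UU° ⊆ R, UR ⊆ U, RU ⊆ U} is isomorphic to the inverse semigroup of partial bijections on Y/R. -/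
/-!
Instead of sending `U` to the partial bijection `α_U`, lift relations on `Y/R` back to `X`:
`liftRel V` relates `x, y ∈ Y` whenever `([x], [y]) ∈ V`. Lifting commutes with composition and
converse, reflects inclusion, and sends the identity of `Y/R` to `R`. Hence `V` is a partial
bijection exactly when its lift satisfies the defining conditions of `I_R(Q)`, and every
`U ∈ I_R(Q)`, being saturated and contained in `Y × Y`, is the lift of its image in `Y/R`.
So taking images in the quotient is inverse to lifting, and both preserve composition.
-/

/-- Relational composition: `rcomp R S = {(z,x) | ∃ y, (z,y) ∈ R ∧ (y,x) ∈ S}`. -/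
def rcomp {X : Type*} (R S : Set (X × X)) : Set (X × X) :=
  {p | ∃ y, (p.1, y) ∈ R ∧ (y, p.2) ∈ S}

/-- Relational converse. -/
def rconv {X : Type*} (R : Set (X × X)) : Set (X × X) :=
  {p | (p.2, p.1) ∈ R}

/-- The setoid on a subset induced by an equivalence relation on it. -/
def projSetoid {X : Type*} (Y : Set X) (R : Set (X × X))
    (hrefl : ∀ y ∈ Y, (y, y) ∈ R)
    (hsymm : ∀ p ∈ R, (p.2, p.1) ∈ R)
    (htrans : ∀ x y z : X, (x, y) ∈ R → (y, z) ∈ R → (x, z) ∈ R) : Setoid Y :=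
  ⟨fun a b => ((a : X), (b : X)) ∈ R,
    ⟨fun a => hrefl a a.2, fun h => hsymm _ h, fun h1 h2 => htrans _ _ _ h1 h2⟩⟩

def partialBijections (α : Type*) : Set (Set (α × α)) :=
  {V | rcomp (rconv V) V ⊆ Set.diagonal α ∧ rcomp V (rconv V) ⊆ Set.diagonal α}

/-- The set `I_R(Q)` for a relation `E` in the role of `R`. -/
def saturatedPartialBijections {X : Type*} (E : Set (X × X)) : Set (Set (X × X)) :=
  {U | rcomp (rconv U) U ⊆ E ∧ rcomp U (rconv U) ⊆ E ∧ rcomp U E ⊆ U ∧ rcomp E U ⊆ U}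

theorem rcomp_diagonal {α : Type*} (V : Set (α × α)) : rcomp V (Set.diagonal α) = V := by
  ext ⟨x, y⟩
  exact ⟨fun ⟨_, h, rfl⟩ => h, fun h => ⟨y, h, rfl⟩⟩

theorem diagonal_rcomp {α : Type*} (V : Set (α × α)) : rcomp (Set.diagonal α) V = V := by
  ext ⟨x, y⟩
  exact ⟨fun ⟨_, rfl, h⟩ => h, fun h => ⟨x, rfl, h⟩⟩

theorem subset_prod_of_rcomp_rconv {X : Type*} {A B : Set X} {U : Set (X × X)}
    (hA : rcomp U (rconv U) ⊆ A ×ˢ A) (hB : rcomp (rconv U) U ⊆ B ×ˢ B) : U ⊆ A ×ˢ B :=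
  fun ⟨x, y⟩ h => ⟨(hA (show (x, x) ∈ _ from ⟨y, h, h⟩)).1, (hB (show (y, y) ∈ _ from ⟨x, h, h⟩)).2⟩

section Quotient

variable {X : Type*} {Y : Set X} (s : Setoid Y)

def liftRel (V : Set (Quotient s × Quotient s)) : Set (X × X) :=
  {p | ∃ (h₁ : p.1 ∈ Y) (h₂ : p.2 ∈ Y), (Quotient.mk s ⟨p.1, h₁⟩, Quotient.mk s ⟨p.2, h₂⟩) ∈ V}

/-- The image of `U` in the quotient; for `U ∈ I_R(Q)` it is the graph `{(α_U b, b)}` of the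
partial bijection `α_U`. -/
def quotRel (U : Set (X × X)) : Set (Quotient s × Quotient s) :=
  {q | ∃ a b : Y, ((a : X), (b : X)) ∈ U ∧ (Quotient.mk s a, Quotient.mk s b) = q}

theorem liftRel_subset_prod (V : Set (Quotient s × Quotient s)) : liftRel s V ⊆ Y ×ˢ Y :=
  fun _ ⟨h₁, h₂, _⟩ => ⟨h₁, h₂⟩

theorem liftRel_rcomp (V W : Set (Quotient s × Quotient s)) :
    liftRel s (rcomp V W) = rcomp (liftRel s V) (liftRel s W) := by
  ext ⟨x, z⟩
  constructor
  · rintro ⟨hx, hz, b, hV, hW⟩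
    obtain ⟨⟨y, hy⟩, rfl⟩ := Quotient.mk_surjective b
    exact ⟨y, ⟨hx, hy, hV⟩, ⟨hy, hz, hW⟩⟩
  · rintro ⟨y, ⟨hx, hy, hV⟩, ⟨_, hz, hW⟩⟩
    exact ⟨hx, hz, _, hV, hW⟩

theorem liftRel_rconv (V : Set (Quotient s × Quotient s)) :
    liftRel s (rconv V) = rconv (liftRel s V) := by
  ext ⟨x, y⟩
  exact ⟨fun ⟨hx, hy, h⟩ => ⟨hy, hx, h⟩, fun ⟨hy, hx, h⟩ => ⟨hx, hy, h⟩⟩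

theorem liftRel_subset_liftRel_iff {V W : Set (Quotient s × Quotient s)} :
    liftRel s V ⊆ liftRel s W ↔ V ⊆ W := by
  refine ⟨fun h q hq => ?_, fun h _ ⟨h₁, h₂, hV⟩ => ⟨h₁, h₂, h hV⟩⟩
  obtain ⟨⟨a, b⟩, rfl⟩ := (Quotient.mk_surjective.prodMap Quotient.mk_surjective) q
  obtain ⟨_, _, hW⟩ := h (show ((a : X), (b : X)) ∈ liftRel s V from ⟨a.2, b.2, hq⟩)
  exact hW

theorem quotRel_liftRel (V : Set (Quotient s × Quotient s)) : quotRel s (liftRel s V) = V := by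
  ext q
  constructor
  · rintro ⟨a, b, ⟨_, _, hV⟩, rfl⟩
    exact hV
  · intro hq
    obtain ⟨⟨a, b⟩, rfl⟩ := (Quotient.mk_surjective.prodMap Quotient.mk_surjective) q
    exact ⟨a, b, ⟨a.2, b.2, hq⟩, rfl⟩

theorem liftRel_quotRel {U : Set (X × X)} (hU : U ⊆ Y ×ˢ Y)
    (hright : rcomp U (liftRel s (Set.diagonal _)) ⊆ U)
    (hleft : rcomp (liftRel s (Set.diagonal _)) U ⊆ U) :
    liftRel s (quotRel s U) = U := by
  ext ⟨x, y⟩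
  constructor
  · rintro ⟨hx, hy, a, b, hab, hq⟩
    obtain ⟨hxa, hby⟩ := Prod.mk.inj hq
    have hxb : (x, (b : X)) ∈ U := hleft ⟨a, ⟨hx, a.2, hxa.symm⟩, hab⟩
    exact hright ⟨b, hxb, ⟨b.2, hy, hby⟩⟩
  · intro h
    exact ⟨(hU h).1, (hU h).2, ⟨x, (hU h).1⟩, ⟨y, (hU h).2⟩, h, rfl⟩

theorem liftRel_quotRel_of_mem {U : Set (X × X)}
    (hU : U ∈ saturatedPartialBijections (liftRel s (Set.diagonal _))) :
    liftRel s (quotRel s U) = U :=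
  liftRel_quotRel s
    (subset_prod_of_rcomp_rconv (hU.2.1.trans (liftRel_subset_prod s _))
      (hU.1.trans (liftRel_subset_prod s _)))
    hU.2.2.1 hU.2.2.2

theorem liftRel_mem_saturatedPartialBijections_iff {V : Set (Quotient s × Quotient s)} :
    liftRel s V ∈ saturatedPartialBijections (liftRel s (Set.diagonal _)) ↔
      V ∈ partialBijections (Quotient s) := by
  simp only [saturatedPartialBijections, partialBijections, Set.mem_ofPred_eq, ← liftRel_rconv,
    ← liftRel_rcomp, liftRel_subset_liftRel_iff, rcomp_diagonal, diagonal_rcomp, subset_refl,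
    and_true]

theorem bijOn_quotRel {E : Set (X × X)} (hE : liftRel s (Set.diagonal _) = E) :
    Set.BijOn (quotRel s) (saturatedPartialBijections E) (partialBijections (Quotient s)) := by
  subst hE
  have hinv : Set.InvOn (liftRel s) (quotRel s)
      (saturatedPartialBijections (liftRel s (Set.diagonal _))) (partialBijections _) :=
    ⟨fun _ hU => liftRel_quotRel_of_mem s hU, fun V _ => quotRel_liftRel s V⟩
  refine hinv.bijOn (fun U hU => ?_)
    (fun _ hV => (liftRel_mem_saturatedPartialBijections_iff s).2 hV)
  rwa [← liftRel_mem_saturatedPartialBijections_iff, hinv.1 hU]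

theorem quotRel_rcomp {E : Set (X × X)} (hE : liftRel s (Set.diagonal _) = E)
    {U U' : Set (X × X)} (hU : U ∈ saturatedPartialBijections E)
    (hU' : U' ∈ saturatedPartialBijections E) :
    quotRel s (rcomp U U') = rcomp (quotRel s U) (quotRel s U') := by
  subst hE
  calc quotRel s (rcomp U U')
      = quotRel s (rcomp (liftRel s (quotRel s U)) (liftRel s (quotRel s U'))) := by
        rw [liftRel_quotRel_of_mem s hU, liftRel_quotRel_of_mem s hU']
    _ = rcomp (quotRel s U) (quotRel s U') := by rw [← liftRel_rcomp, quotRel_liftRel]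

end Quotient

theorem liftRel_projSetoid_diagonal {X : Type*} {Y : Set X} {R : Set (X × X)}
    (hsub : R ⊆ Y ×ˢ Y) (hrefl : ∀ y ∈ Y, (y, y) ∈ R) (hsymm : ∀ p ∈ R, (p.2, p.1) ∈ R)
    (htrans : ∀ x y z : X, (x, y) ∈ R → (y, z) ∈ R → (x, z) ∈ R) :
    liftRel (projSetoid Y R hrefl hsymm htrans) (Set.diagonal _) = R := by
  ext ⟨x, y⟩
  exact ⟨fun ⟨_, _, h⟩ => Quotient.exact h, fun h => ⟨(hsub h).1, (hsub h).2, Quotient.sound h⟩⟩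

theorem IR_iso_partial_bijections_on_quotient {X : Type*} (Y : Set X) (R : Set (X × X))
    (hsub : R ⊆ Y ×ˢ Y)
    (hrefl : ∀ y ∈ Y, (y, y) ∈ R)
    (hsymm : ∀ p ∈ R, (p.2, p.1) ∈ R)
    (htrans : ∀ x y z : X, (x, y) ∈ R → (y, z) ∈ R → (x, z) ∈ R) :
    ∃ e : Set (X × X) →
        Set (Quotient (projSetoid Y R hrefl hsymm htrans) ×
             Quotient (projSetoid Y R hrefl hsymm htrans)),
      Set.BijOn e
        {U | rcomp (rconv U) U ⊆ R ∧ rcomp U (rconv U) ⊆ R ∧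
             rcomp U R ⊆ U ∧ rcomp R U ⊆ U}
        {V | rcomp (rconv V) V ⊆ {p | p.1 = p.2} ∧
             rcomp V (rconv V) ⊆ {p | p.1 = p.2}} ∧
      ∀ U ∈ {U | rcomp (rconv U) U ⊆ R ∧ rcomp U (rconv U) ⊆ R ∧
             rcomp U R ⊆ U ∧ rcomp R U ⊆ U},
        ∀ U' ∈ {U | rcomp (rconv U) U ⊆ R ∧ rcomp U (rconv U) ⊆ R ∧
             rcomp U R ⊆ U ∧ rcomp R U ⊆ U},
          e (rcomp U U') = rcomp (e U) (e U') := by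
  have hR := liftRel_projSetoid_diagonal hsub hrefl hsymm htrans
  exact ⟨quotRel _, bijOn_quotRel _ hR, fun _ hU _ hU' => quotRel_rcomp _ hR hU hU'⟩
end
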